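/- Let m_e, m_f, m_g be positive integers and let gamma_e, gamma_f, gamma_g, gamma_P, gamma_S1, gamma_S2, gamma_th be positive reals. Let E, F, G be independent random variables where E is Gamma-distributed with shape m_e and scale gamma_e/m_e, F is Gamma-distributed with shape m_f and scale gamma_f/m_f, and G is Gamma-distributed with shape m_g and scale gamma_g/m_g. Then the primary outage probability satisfies the closed form: P( gamma_P * E / (gamma_S1 * F + gamma_S2 * G + 1) <= gamma_th ) = 1 - exp( - m_e*gamma_th/(gamma_e*gamma_P) ) * sum_{l=0}^{m_e-1} [ (m_e*gamma_th/(gamma_e*gamma_P))^l / l! ] * sum_{t1=0}^{l} sum_{t2=0}^{l-t1} C(l,t1) * C(l-t1,t2) * gamma_S1^{t1} * gamma_S2^{t2} * [ m_f^{m_f} * Gamma(m_f+t1) / (Gamma(m_f) * gamma_f^{m_f}) ] * ( m_f/gamma_f + m_e*gamma_S1*gamma_th/(gamma_e*gamma_P) )^{-(m_f+t1)} * [ m_g^{m_g} * Gamma(m_g+t2) / (Gamma(m_g) * gamma_g^{m_g}) ] * ( m_g/gamma_g + m_e*gamma_S2*gamma_th/(gamma_e*gamma_P) )^{-(m_g+t2)},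 where C(n,k) denotes the binomial coefficient and Gamma is the Gamma function (so Gamma(m+k) = (m+k-1)! for positive integers). -/

import Mathlib

/-!
Given the interference `D = γS1 F + γS2 G + 1`, there is no outage iff `E > (γth / γP) D`, and
since `E` has integer shape `m_e` and rate `m_e / γe` this has the Erlang (Poisson) probability
`e^{-κ D} ∑_{l < m_e} (κ D)^l / l!` with `κ = m_e γth / (γe γP)`. Expanding `D^l` by the trinomial
theorem and using the independence of `F` and `G`, each term factors into moments
`𝔼[X^t e^{-c X}]` of Gamma variables, and these are explicit because `x^t e^{-c x}` times the
Gamma`(m, λ)` density is a constant multiple of the Gamma`(m + t, λ + c)` density.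
-/

open MeasureTheory ProbabilityTheory Real Finset
open scoped Nat

lemma add_add_pow {R : Type*} [CommSemiring R] (x y z : R) (n : ℕ) :
    (x + y + z) ^ n = ∑ i ∈ range (n + 1), ∑ j ∈ range (n - i + 1),
      (n.choose i : R) * ((n - i).choose j : R) * x ^ i * y ^ j * z ^ (n - i - j) := by
  rw [add_assoc, add_pow]
  refine sum_congr rfl fun i _ => ?_
  rw [add_pow, mul_sum, sum_mul]
  refine sum_congr rfl fun j _ => ?_
  ring

lemma exp_neg_mul_mul_pow_div_factorial_eq_sum (κ a b x y : ℝ) (l : ℕ) :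
    exp (-(κ * (a * x + b * y + 1))) * ((κ * (a * x + b * y + 1)) ^ l / l !) =
      ∑ i ∈ range (l + 1), ∑ j ∈ range (l - i + 1),
        exp (-κ) * (κ ^ l / l !) * ((l.choose i : ℝ) * ((l - i).choose j : ℝ) * a ^ i * b ^ j) *
          ((x ^ i * exp (-(κ * a * x))) * (y ^ j * exp (-(κ * b * y)))) := by
  have hexp : exp (-(κ * (a * x + b * y + 1))) =
      exp (-κ) * exp (-(κ * a * x)) * exp (-(κ * b * y)) := by
    rw [← exp_add, ← exp_add]; ring_nf
  rw [hexp, mul_pow, add_add_pow, mul_sum, sum_div, mul_sum]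
  refine sum_congr rfl fun i _ => ?_
  rw [mul_sum, sum_div, mul_sum]
  refine sum_congr rfl fun j _ => ?_
  rw [one_pow]
  ring

lemma integral_prod_one_sub_exp_neg_mul_sum_pow_div_factorial {ν₁ ν₂ : Measure ℝ}
    [IsProbabilityMeasure ν₁] [IsProbabilityMeasure ν₂] (κ a b : ℝ) (n : ℕ)
    (h₁ : ∀ i : ℕ, Integrable (fun x => x ^ i * exp (-(κ * a * x))) ν₁)
    (h₂ : ∀ j : ℕ, Integrable (fun y => y ^ j * exp (-(κ * b * y))) ν₂) :
    ∫ z, 1 - exp (-(κ * (a * z.1 + b * z.2 + 1))) *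
        (∑ l ∈ range n, (κ * (a * z.1 + b * z.2 + 1)) ^ l / l !) ∂ν₁.prod ν₂ =
      1 - exp (-κ) * ∑ l ∈ range n, κ ^ l / l ! *
        ∑ i ∈ range (l + 1), ∑ j ∈ range (l - i + 1),
          (l.choose i : ℝ) * ((l - i).choose j : ℝ) * a ^ i * b ^ j *
            (∫ x, x ^ i * exp (-(κ * a * x)) ∂ν₁) * (∫ y, y ^ j * exp (-(κ * b * y)) ∂ν₂) := by
  simp_rw [mul_sum, exp_neg_mul_mul_pow_div_factorial_eq_sum]
  have hterm : ∀ l i j : ℕ, Integrable (fun z : ℝ × ℝ =>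
      exp (-κ) * (κ ^ l / l !) * ((l.choose i : ℝ) * ((l - i).choose j : ℝ) * a ^ i * b ^ j) *
        ((z.1 ^ i * exp (-(κ * a * z.1))) * (z.2 ^ j * exp (-(κ * b * z.2))))) (ν₁.prod ν₂) :=
    fun l i j => ((h₁ i).mul_prod (h₂ j)).const_mul _
  rw [integral_sub (integrable_const 1) (integrable_finsetSum _ fun l _ =>
      integrable_finsetSum _ fun i _ => integrable_finsetSum _ fun j _ => hterm l i j),
    integral_const, probReal_univ, one_smul,
    integral_finsetSum _ fun l _ =>
      integrable_finsetSum _ fun i _ => integrable_finsetSum _ fun j _ => hterm l i j]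
  congr 1
  refine sum_congr rfl fun l _ => ?_
  rw [integral_finsetSum _ fun i _ => integrable_finsetSum _ fun j _ => hterm l i j]
  refine sum_congr rfl fun i _ => ?_
  rw [integral_finsetSum _ fun j _ => hterm l i j]
  refine sum_congr rfl fun j _ => ?_
  rw [integral_const_mul, integral_prod_mul (f := fun x => x ^ i * exp (-(κ * a * x)))
    (g := fun y => y ^ j * exp (-(κ * b * y)))]
  ring

lemma ae_nonneg_gammaMeasure (a r : ℝ) : ∀ᵐ x ∂gammaMeasure a r, 0 ≤ x := by
  rw [ae_iff]
  simp only [not_le]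
  change gammaMeasure a r (Set.Iio 0) = 0
  rw [gammaMeasure, withDensity_apply _ measurableSet_Iio]
  exact lintegral_gammaPDF_of_nonpos le_rfl

lemma measurable_gammaPDF (a r : ℝ) : Measurable (gammaPDF a r) :=
  (measurable_gammaPDFReal a r).ennreal_ofReal

lemma integrable_gammaPDFReal {a r : ℝ} (ha : 0 < a) (hr : 0 < r) :
    Integrable (gammaPDFReal a r) := by
  have := integrable_toReal_of_lintegral_ne_top (μ := volume)
    (measurable_gammaPDF a r).aemeasurable (by simp [lintegral_gammaPDF_eq_one ha hr])
  simpa [gammaPDF, ENNReal.toReal_ofReal (gammaPDFReal_nonneg ha hr _)] using this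

lemma integral_gammaPDFReal {a r : ℝ} (ha : 0 < a) (hr : 0 < r) :
    ∫ x, gammaPDFReal a r x = 1 := by
  rw [integral_eq_lintegral_of_nonneg_ae (ae_of_all _ (gammaPDFReal_nonneg ha hr))
    (measurable_gammaPDFReal a r).aestronglyMeasurable]
  change (∫⁻ x, gammaPDF a r x).toReal = 1
  simp [lintegral_gammaPDF_eq_one ha hr]

lemma integrable_gammaMeasure_iff {a r : ℝ} (ha : 0 < a) (hr : 0 < r) {g : ℝ → ℝ} :
    Integrable g (gammaMeasure a r) ↔ Integrable (fun x => gammaPDFReal a r x * g x) := by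
  rw [gammaMeasure, integrable_withDensity_iff_integrable_smul'
    (measurable_gammaPDF a r) (ae_of_all _ fun _ => ENNReal.ofReal_lt_top)]
  simp [gammaPDF, ENNReal.toReal_ofReal (gammaPDFReal_nonneg ha hr _)]

lemma integral_gammaMeasure {a r : ℝ} (ha : 0 < a) (hr : 0 < r) (g : ℝ → ℝ) :
    ∫ x, g x ∂gammaMeasure a r = ∫ x, gammaPDFReal a r x * g x := by
  rw [gammaMeasure, integral_withDensity_eq_integral_toReal_smul
    (measurable_gammaPDF a r) (ae_of_all _ fun _ => ENNReal.ofReal_lt_top)]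
  simp [gammaPDF, ENNReal.toReal_ofReal (gammaPDFReal_nonneg ha hr _)]

lemma gammaPDFReal_mul_pow_mul_exp_neg_mul {m r c : ℝ} (t : ℕ) (hm : 0 < m) (hrc : 0 < r + c)
    (x : ℝ) :
    gammaPDFReal m r x * (x ^ t * exp (-(c * x))) =
      r ^ m * Gamma (m + t) / (Gamma m * (r + c) ^ (m + t)) * gammaPDFReal (m + t) (r + c) x := by
  unfold gammaPDFReal
  split_ifs with hx
  · have hpow : x ^ (m + t - 1) = x ^ (m - 1) * x ^ t := by
      rcases t.eq_zero_or_pos with rfl | ht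
      · simp
      · have : (1 : ℝ) ≤ t := by exact_mod_cast ht
        rw [← rpow_natCast, ← rpow_add' hx (by linarith)]
        ring_nf
    have hexp : exp (-((r + c) * x)) = exp (-(r * x)) * exp (-(c * x)) := by
      rw [← exp_add]; ring_nf
    have : Gamma (m + t) ≠ 0 := (Gamma_pos_of_pos (by positivity)).ne'
    have : (r + c) ^ (m + t) ≠ 0 := (rpow_pos_of_pos hrc _).ne'
    rw [hpow, hexp]
    field_simp
  · simp

lemma integrable_pow_mul_exp_neg_mul_gammaMeasure {m r c : ℝ} (t : ℕ) (hm : 0 < m) (hr : 0 < r)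
    (hrc : 0 < r + c) : Integrable (fun x => x ^ t * exp (-(c * x))) (gammaMeasure m r) := by
  rw [integrable_gammaMeasure_iff hm hr]
  simp_rw [gammaPDFReal_mul_pow_mul_exp_neg_mul t hm hrc]
  exact (integrable_gammaPDFReal (by positivity) hrc).const_mul _

lemma integral_pow_mul_exp_neg_mul_gammaMeasure {m r c : ℝ} (t : ℕ) (hm : 0 < m) (hr : 0 < r)
    (hrc : 0 < r + c) :
    ∫ x, x ^ t * exp (-(c * x)) ∂gammaMeasure m r =
      r ^ m * Gamma (m + t) / (Gamma m * (r + c) ^ (m + t)) := by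
  rw [integral_gammaMeasure hm hr]
  simp_rw [gammaPDFReal_mul_pow_mul_exp_neg_mul t hm hrc]
  rw [integral_const_mul, integral_gammaPDFReal (by positivity) hrc, mul_one]

lemma integral_pow_mul_exp_neg_mul_gammaMeasure_natCast {m : ℕ} (t : ℕ) {γ c : ℝ} (hm : 0 < m)
    (hγ : 0 < γ) (hc : 0 < m / γ + c) :
    ∫ x, x ^ t * exp (-(c * x)) ∂gammaMeasure m (m / γ) =
      (m : ℝ) ^ m * Gamma ((m : ℝ) + t) / (Gamma m * γ ^ m) * (m / γ + c) ^ (-((m : ℤ) + t)) := by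
  rw [integral_pow_mul_exp_neg_mul_gammaMeasure t (by positivity) (by positivity) hc,
    rpow_natCast, ← Nat.cast_add, rpow_natCast, ← Nat.cast_add, zpow_neg, zpow_natCast, div_pow]
  have : Gamma m ≠ 0 := (Gamma_pos_of_pos (by positivity)).ne'
  field_simp

lemma hasDerivAt_exp_neg_mul_mul_sum_pow_div_factorial (k : ℕ) (r x : ℝ) :
    HasDerivAt (fun t => exp (-(r * t)) * ∑ l ∈ range (k + 1), (r * t) ^ l / l !)
      (-(r ^ (k + 1) / k ! * x ^ k * exp (-(r * x)))) x := by
  have hexp : HasDerivAt (fun t => exp (-(r * t))) (-r * exp (-(r * x))) x := by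
    simpa [mul_comm] using ((hasDerivAt_id x).const_mul r).neg.exp
  induction k with
  | zero => simpa using hexp
  | succ k ih =>
    have hterm : HasDerivAt (fun t => (r * t) ^ (k + 1) / (k + 1)!)
        ((k + 1) * (r * x) ^ k * r / (k + 1)!) x := by
      simpa using (((hasDerivAt_id x).const_mul r).pow (k + 1)).div_const ((k + 1)! : ℝ)
    simp only [sum_range_succ _ (k + 1), mul_add]
    refine (ih.fun_add (hexp.fun_mul hterm)).congr_deriv ?_
    rw [Nat.factorial_succ]
    push_cast
    field_simp
    ring

lemma gammaPDFReal_natCast_succ (k : ℕ) (r : ℝ) :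
    gammaPDFReal (k + 1 : ℕ) r =
      (Set.Ici 0).indicator fun t => r ^ (k + 1) / k ! * t ^ k * exp (-(r * t)) := by
  ext t
  simp only [gammaPDFReal, Set.indicator, Set.mem_Ici]
  congr 1
  rw [rpow_natCast, Nat.cast_add_one, Gamma_nat_eq_factorial, add_sub_cancel_right,
    rpow_natCast]

lemma cdf_gammaMeasure_natCast {n : ℕ} (hn : 0 < n) {r x : ℝ} (hr : 0 < r) (hx : 0 ≤ x) :
    cdf (gammaMeasure n r) x = 1 - exp (-(r * x)) * ∑ l ∈ range n, (r * x) ^ l / l ! := by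
  obtain ⟨k, rfl⟩ := Nat.exists_eq_add_of_lt hn
  rw [zero_add, cdf_gammaMeasure_eq_integral (by positivity) hr, gammaPDFReal_natCast_succ,
    setIntegral_indicator measurableSet_Ici, Set.Iic_inter_Ici, integral_Icc_eq_integral_Ioc,
    ← intervalIntegral.integral_of_le hx]
  have hderiv : ∀ t ∈ Set.uIcc 0 x, HasDerivAt
      (fun t => 1 - exp (-(r * t)) * ∑ l ∈ range (k + 1), (r * t) ^ l / l !)
      (r ^ (k + 1) / k ! * t ^ k * exp (-(r * t))) t := fun t _ => by
    simpa using (hasDerivAt_exp_neg_mul_mul_sum_pow_div_factorial k r t).const_sub 1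
  rw [intervalIntegral.integral_eq_sub_of_hasDerivAt hderiv
    (Continuous.intervalIntegrable (by fun_prop) 0 x)]
  simp [sum_range_succ']

lemma measureReal_le_comp_eq_integral_cdf {Ω α : Type*} [MeasurableSpace Ω] [MeasurableSpace α]
    {μ : Measure Ω} [IsProbabilityMeasure μ] {X : Ω → α} {Y : Ω → ℝ} (hX : Measurable X)
    (hY : Measurable Y) (hXY : IndepFun X Y μ) {h : α → ℝ} (hh : Measurable h) :
    μ.real {ω | Y ω ≤ h (X ω)} = ∫ x, cdf (μ.map Y) (h x) ∂μ.map X := by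
  have : IsProbabilityMeasure (μ.map Y) := Measure.isProbabilityMeasure_map hY.aemeasurable
  have hS : MeasurableSet {p : α × ℝ | p.2 ≤ h p.1} := measurableSet_le (by fun_prop) (by fun_prop)
  have hmap := (indepFun_iff_map_prod_eq_prod_map_map hX.aemeasurable hY.aemeasurable).mp hXY
  rw [measureReal_def, show {ω | Y ω ≤ h (X ω)} = (fun ω => (X ω, Y ω)) ⁻¹' {p | p.2 ≤ h p.1}
    from rfl, ← Measure.map_apply (hX.prodMk hY) hS, hmap, Measure.prod_apply hS,
    ← integral_toReal (measurable_measure_prodMk_left hS).aemeasurable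
      (ae_of_all _ fun _ => measure_lt_top _ _)]
  simp_rw [cdf_eq_real, measureReal_def]
  rfl

lemma measureReal_le_comp_eq_integral_gammaMeasure_natCast {Ω α : Type*} [MeasurableSpace Ω]
    [MeasurableSpace α] {μ : Measure Ω} [IsProbabilityMeasure μ] {X : Ω → α} {Y : Ω → ℝ}
    (hX : Measurable X) (hY : Measurable Y) (hXY : IndepFun X Y μ) {n : ℕ} (hn : 0 < n) {r : ℝ}
    (hr : 0 < r) (hYd : μ.map Y = gammaMeasure n r) {h : α → ℝ} (hh : Measurable h)
    (hh₀ : ∀ᵐ x ∂μ.map X, 0 ≤ h x) :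
    μ.real {ω | Y ω ≤ h (X ω)} =
      ∫ x, 1 - exp (-(r * h x)) * (∑ l ∈ range n, (r * h x) ^ l / l !) ∂μ.map X := by
  rw [measureReal_le_comp_eq_integral_cdf hX hY hXY hh, hYd]
  exact integral_congr_ae (hh₀.mono fun x hx => cdf_gammaMeasure_natCast hn hr hx)

lemma setOf_mul_div_le_ae_eq {Ω : Type*} [MeasurableSpace Ω] {μ : Measure Ω} {c θ : ℝ}
    (hc : 0 < c) {E D : Ω → ℝ} (hD : ∀ᵐ ω ∂μ, 0 < D ω) :
    {ω | c * E ω / D ω ≤ θ} =ᵐ[μ] {ω | E ω ≤ θ / c * D ω} := by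
  filter_upwards [hD] with ω hDω
  change (c * E ω / D ω ≤ θ) = (E ω ≤ θ / c * D ω)
  rw [div_le_iff₀ hDω, ← le_div_iff₀' hc, mul_div_right_comm]

lemma measureReal_mul_div_add_add_one_le_eq_integral {Ω : Type*} [MeasurableSpace Ω]
    {μ : Measure Ω} [IsProbabilityMeasure μ] {E F G : Ω → ℝ} (hE : Measurable E)
    (hF : Measurable F) (hG : Measurable G) (hindep : iIndepFun ![E, F, G] μ) {n : ℕ} (hn : 0 < n)
    {r : ℝ} (hr : 0 < r) (hEd : μ.map E = gammaMeasure n r) (hF₀ : ∀ᵐ ω ∂μ, 0 ≤ F ω)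
    (hG₀ : ∀ᵐ ω ∂μ, 0 ≤ G ω) {c a b θ : ℝ} (hc : 0 < c) (ha : 0 ≤ a) (hb : 0 ≤ b) (hθ : 0 ≤ θ) :
    μ.real {ω | c * E ω / (a * F ω + b * G ω + 1) ≤ θ} =
      ∫ y, 1 - exp (-(r * (θ / c) * (a * y.1 + b * y.2 + 1))) *
        (∑ l ∈ range n, (r * (θ / c) * (a * y.1 + b * y.2 + 1)) ^ l / l !)
        ∂(μ.map F).prod (μ.map G) := by
  have hlaw : μ.map (fun ω => (F ω, G ω)) = (μ.map F).prod (μ.map G) :=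
    (indepFun_iff_map_prod_eq_prod_map_map hF.aemeasurable hG.aemeasurable).mp
      (hindep.indepFun (show (1 : Fin 3) ≠ 2 by decide))
  have hFGE : IndepFun (fun ω => (F ω, G ω)) E μ :=
    hindep.indepFun_prodMk (fun i => by fin_cases i <;> assumption) 1 2 0 (by decide) (by decide)
  have hD : ∀ᵐ ω ∂μ, 0 < a * F ω + b * G ω + 1 := by
    filter_upwards [hF₀, hG₀] with ω hFω hGω
    positivity
  rw [measureReal_congr (setOf_mul_div_le_ae_eq (D := fun ω => a * F ω + b * G ω + 1) hc hD),
    measureReal_le_comp_eq_integral_gammaMeasure_natCast (hF.prodMk hG) hE hFGE hn hr hEd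
      (h := fun y => θ / c * (a * y.1 + b * y.2 + 1)) (by fun_prop)
      ((ae_map_iff (hF.prodMk hG).aemeasurable (measurableSet_le (by fun_prop) (by fun_prop))).2
        (hD.mono fun ω hω => mul_nonneg (by positivity) hω.le)), hlaw]
  simp_rw [← mul_assoc r (θ / c)]

/-- Closed-form primary outage probability
`P(γP·E/(γS1·F + γS2·G + 1) ≤ γth)` for independent Gamma-distributed
squared channel gains `E, F, G`. -/
theorem primary_outage_closed_form
    {Ω : Type*} [MeasurableSpace Ω] (μ : Measure Ω) [IsProbabilityMeasure μ]
    (m_e m_f m_g : ℕ) (hme : 0 < m_e) (hmf : 0 < m_f) (hmg : 0 < m_g)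
    (γe γf γg γP γS1 γS2 γth : ℝ)
    (hγe : 0 < γe) (hγf : 0 < γf) (hγg : 0 < γg) (hγP : 0 < γP)
    (hγS1 : 0 < γS1) (hγS2 : 0 < γS2) (hγth : 0 < γth)
    (E F G : Ω → ℝ) (hE : Measurable E) (hF : Measurable F) (hG : Measurable G)
    (hEd : μ.map E = gammaMeasure m_e ((m_e : ℝ) / γe))
    (hFd : μ.map F = gammaMeasure m_f ((m_f : ℝ) / γf))
    (hGd : μ.map G = gammaMeasure m_g ((m_g : ℝ) / γg))
    (hindep : iIndepFun ![E, F, G] μ) :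
    (μ {ω | γP * E ω / (γS1 * F ω + γS2 * G ω + 1) ≤ γth}).toReal =
      1 - Real.exp (-((m_e : ℝ) * γth / (γe * γP))) *
        ∑ l ∈ Finset.range m_e,
          (((m_e : ℝ) * γth / (γe * γP)) ^ l / (Nat.factorial l : ℝ)) *
          ∑ t1 ∈ Finset.range (l + 1), ∑ t2 ∈ Finset.range (l - t1 + 1),
            (l.choose t1 : ℝ) * ((l - t1).choose t2 : ℝ) * γS1 ^ t1 * γS2 ^ t2 *
            ((m_f : ℝ) ^ m_f * Real.Gamma ((m_f : ℝ) + t1) /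
              (Real.Gamma m_f * γf ^ m_f)) *
            ((m_f / γf + (m_e : ℝ) * γS1 * γth / (γe * γP)) ^ (-((m_f : ℤ) + t1))) *
            ((m_g : ℝ) ^ m_g * Real.Gamma ((m_g : ℝ) + t2) /
              (Real.Gamma m_g * γg ^ m_g)) *
            ((m_g / γg + (m_e : ℝ) * γS2 * γth / (γe * γP)) ^ (-((m_g : ℤ) + t2))) := by
  have hκ : (m_e : ℝ) * γth / (γe * γP) = m_e / γe * (γth / γP) := by ring
  have hκ_mul (s : ℝ) : (m_e : ℝ) * s * γth / (γe * γP) = m_e / γe * (γth / γP) * s := by ring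
  simp only [hκ, hκ_mul]
  set κ : ℝ := m_e / γe * (γth / γP)
  have hF₀ : ∀ᵐ ω ∂μ, 0 ≤ F ω :=
    ae_of_ae_map hF.aemeasurable (by rw [hFd]; exact ae_nonneg_gammaMeasure _ _)
  have hG₀ : ∀ᵐ ω ∂μ, 0 ≤ G ω :=
    ae_of_ae_map hG.aemeasurable (by rw [hGd]; exact ae_nonneg_gammaMeasure _ _)
  have : IsProbabilityMeasure (gammaMeasure m_f ((m_f : ℝ) / γf)) :=
    isProbabilityMeasure_gammaMeasure (by positivity) (by positivity)
  have : IsProbabilityMeasure (gammaMeasure m_g ((m_g : ℝ) / γg)) :=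
    isProbabilityMeasure_gammaMeasure (by positivity) (by positivity)
  rw [← measureReal_def, measureReal_mul_div_add_add_one_le_eq_integral hE hF hG hindep hme
      (by positivity) hEd hF₀ hG₀ hγP hγS1.le hγS2.le hγth.le, hFd, hGd,
    integral_prod_one_sub_exp_neg_mul_sum_pow_div_factorial κ γS1 γS2 m_e
      (fun i => integrable_pow_mul_exp_neg_mul_gammaMeasure i (by positivity) (by positivity)
        (by positivity))
      (fun j => integrable_pow_mul_exp_neg_mul_gammaMeasure j (by positivity) (by positivity)
        (by positivity))]
  simp_rw [integral_pow_mul_exp_neg_mul_gammaMeasure_natCast _ hmf hγf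
      (show 0 < (m_f : ℝ) / γf + κ * γS1 by positivity),
    integral_pow_mul_exp_neg_mul_gammaMeasure_natCast _ hmg hγg
      (show 0 < (m_g : ℝ) / γg + κ * γS2 by positivity)]
  simp only [mul_assoc]
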